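/- For every coherent pair of random variables (X,Y) one has E|X-Y|² ≤ 1/4, and this bound is sharp: the supremum of E|X-Y|² over all coherent pairs (X,Y) equals 1/4. -/

import Mathlib

open MeasureTheory ProbabilityTheory

/-!
Write `g = E[f | G]` and `k = E[f | H]` for `f = 1_A`. Whenever `0 ≤ f ≤ 1`, pointwise
`(g - k)² ≤ 1/4 + (1 - 2g)(f - g) + (1 - 2k)(f - k)`: the difference is
`(g + k - f - 1/2)² + f (1 - f)`. As `f - g` is orthogonal to the bounded `G`-measurable function
`1 - 2g`, and likewise for `k`, integrating gives `E(g - k)² ≤ 1/4`. A fair coin with `G` trivial and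
`H` everything attains the bound: there `g = 1/2` and `k = f`.
-/

/-- A pair of random variables `(X, Y)` on a probability space is *coherent* if there are an
event `A` and sub-σ-algebras `G`, `H` such that `X = E[1_A | G]` and `Y = E[1_A | H]` a.s. -/
def IsCoherentPair {Ω : Type} [m0 : MeasurableSpace Ω] (μ : Measure Ω) (X Y : Ω → ℝ) : Prop :=
  ∃ (A : Set Ω) (G H : MeasurableSpace Ω),
    MeasurableSet A ∧ G ≤ m0 ∧ H ≤ m0 ∧
    X =ᵐ[μ] μ[A.indicator (fun _ => (1 : ℝ)) | G] ∧
    Y =ᵐ[μ] μ[A.indicator (fun _ => (1 : ℝ)) | H]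

/-- The set of values `E|X - Y|²` over all coherent pairs `(X, Y)`. -/
def coherentSqVals : Set ℝ :=
  { r : ℝ | ∃ (Ω : Type) (m0 : MeasurableSpace Ω) (μ : Measure Ω),
      IsProbabilityMeasure μ ∧ ∃ X Y : Ω → ℝ,
        IsCoherentPair μ X Y ∧ r = ∫ ω, |X ω - Y ω| ^ 2 ∂μ }

lemma sub_sq_le_quarter_add_mul_sub {f : ℝ} (hf₀ : 0 ≤ f) (hf₁ : f ≤ 1) (g k : ℝ) :
    (g - k) ^ 2 ≤ 1 / 4 + (1 - 2 * g) * (f - g) + (1 - 2 * k) * (f - k) := by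
  nlinarith [sq_nonneg (g + k - f - 1 / 2), mul_nonneg hf₀ (sub_nonneg.2 hf₁)]

section CondExp

variable {Ω : Type*} {m m0 : MeasurableSpace Ω} {μ : Measure Ω}

lemma integral_mul_sub_condExp_eq_zero [IsFiniteMeasure μ] (hm : m ≤ m0) {f h : Ω → ℝ}
    (hh : StronglyMeasurable[m] h) {C : ℝ} (hC : ∀ᵐ ω ∂μ, ‖h ω‖ ≤ C) (hf : Integrable f μ) :
    ∫ ω, h ω * (f ω - μ[f|m] ω) ∂μ = 0 := by
  have hpull : μ[h * f|m] =ᵐ[μ] h * μ[f|m] :=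
    condExp_stronglyMeasurable_mul_of_bound hm hh hf C hC
  have hhf : Integrable (fun ω => h ω * f ω) μ := hf.bdd_mul (hh.mono hm).aestronglyMeasurable hC
  have hhg : Integrable (fun ω => h ω * μ[f|m] ω) μ :=
    integrable_condExp.bdd_mul (hh.mono hm).aestronglyMeasurable hC
  have hpull_int : ∫ ω, h ω * f ω ∂μ = ∫ ω, h ω * μ[f|m] ω ∂μ :=
    (integral_condExp hm).symm.trans (integral_congr_ae hpull)
  simp_rw [mul_sub]
  rw [integral_sub hhf hhg, hpull_int, sub_self]

theorem integral_condExp_sub_condExp_sq_le_quarter [IsProbabilityMeasure μ]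
    {G H : MeasurableSpace Ω} (hG : G ≤ m0) (hH : H ≤ m0) {f : Ω → ℝ} (hf : Integrable f μ)
    (hf₀₁ : ∀ᵐ ω ∂μ, f ω ∈ Set.Icc 0 1) :
    ∫ ω, (μ[f|G] ω - μ[f|H] ω) ^ 2 ∂μ ≤ 1 / 4 := by
  have hf_bdd : ∀ᵐ ω ∂μ, |f ω| ≤ 1 := by
    filter_upwards [hf₀₁] with ω ⟨h₀, h₁⟩
    simpa [abs_of_nonneg h₀] using h₁
  have weight_bdd : ∀ m : MeasurableSpace Ω, ∀ᵐ ω ∂μ, ‖1 - 2 * μ[f|m] ω‖ ≤ 3 := by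
    intro m
    filter_upwards [ae_bdd_abs_condExp_of_ae_bdd_abs (m := m) hf_bdd] with ω h
    rw [abs_le] at h
    rw [Real.norm_eq_abs, abs_le]
    constructor <;> linarith
  have weight_orthogonal : ∀ m : MeasurableSpace Ω, m ≤ m0 →
      Integrable (fun ω => (1 - 2 * μ[f|m] ω) * (f ω - μ[f|m] ω)) μ ∧
      ∫ ω, (1 - 2 * μ[f|m] ω) * (f ω - μ[f|m] ω) ∂μ = 0 := by
    intro m hm
    have hw : StronglyMeasurable[m] fun ω => 1 - 2 * μ[f|m] ω :=
      stronglyMeasurable_const.sub (stronglyMeasurable_condExp.const_mul 2)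
    exact ⟨(hf.sub integrable_condExp).bdd_mul (hw.mono hm).aestronglyMeasurable (weight_bdd m),
      integral_mul_sub_condExp_eq_zero hm hw (weight_bdd m) hf⟩
  obtain ⟨hGi, hG0⟩ := weight_orthogonal G hG
  obtain ⟨hHi, hH0⟩ := weight_orthogonal H hH
  calc ∫ ω, (μ[f|G] ω - μ[f|H] ω) ^ 2 ∂μ
      ≤ ∫ ω, (1 / 4 + (1 - 2 * μ[f|G] ω) * (f ω - μ[f|G] ω)
          + (1 - 2 * μ[f|H] ω) * (f ω - μ[f|H] ω)) ∂μ := by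
        refine integral_mono_of_nonneg (ae_of_all _ fun ω => sq_nonneg _)
          (((integrable_const _).add hGi).add hHi) ?_
        filter_upwards [hf₀₁] with ω ⟨h₀, h₁⟩
        exact sub_sq_le_quarter_add_mul_sub h₀ h₁ _ _
    _ = 1 / 4 := by
        rw [integral_add ?_ hHi, integral_add (integrable_const _) hGi, hG0, hH0]
        · simp
        · exact (integrable_const _).add hGi

end CondExp

theorem IsCoherentPair.integral_sq_abs_sub_le_quarter {Ω : Type} [MeasurableSpace Ω]
    {μ : Measure Ω} [IsProbabilityMeasure μ] {X Y : Ω → ℝ} (h : IsCoherentPair μ X Y) :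
    ∫ ω, |X ω - Y ω| ^ 2 ∂μ ≤ 1 / 4 := by
  obtain ⟨A, G, H, hA, hG, hH, hX, hY⟩ := h
  calc ∫ ω, |X ω - Y ω| ^ 2 ∂μ
      = ∫ ω, (μ[A.indicator (fun _ => (1 : ℝ))|G] ω - μ[A.indicator (fun _ => 1)|H] ω) ^ 2 ∂μ :=
        integral_congr_ae <| by filter_upwards [hX, hY] with ω hXω hYω; rw [sq_abs, hXω, hYω]
    _ ≤ 1 / 4 := by
        refine integral_condExp_sub_condExp_sq_le_quarter hG hH
          ((integrable_const 1).indicator (hH _ hA)) (ae_of_all _ fun ω => ?_)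
        by_cases hω : ω ∈ A <;> simp [hω]

lemma quarter_mem_coherentSqVals : (1 / 4 : ℝ) ∈ coherentSqVals := by
  let μ : Measure Bool := uniformOn Set.univ
  let heads : Bool → ℝ := ({true} : Set Bool).indicator fun _ => 1
  have h_heads : ∫ ω, heads ω ∂μ = 1 / 2 := by
    change ∫ ω, ({true} : Set Bool).indicator 1 ω ∂μ = 1 / 2
    rw [integral_indicator_one (measurableSet_singleton true), Measure.real_def, uniformOn_univ]
    simp
  refine ⟨Bool, inferInstance, μ, inferInstance, fun _ => 1 / 2, heads,
    ⟨{true}, ⊥, inferInstance, trivial, bot_le, le_rfl, ?_, ?_⟩, ?_⟩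
  · rw [condExp_bot, h_heads]
  · rw [condExp_of_stronglyMeasurable le_rfl
      (stronglyMeasurable_const.indicator (measurableSet_singleton true))
      ((integrable_const 1).indicator (measurableSet_singleton true))]
  · have h : ∀ ω, |1 / 2 - heads ω| ^ 2 = 1 / 4 := by
      intro ω; cases ω <;> norm_num [heads]
    simp_rw [h]
    rw [integral_const, probReal_univ, one_smul]

/-- Every coherent pair satisfies `E|X - Y|² ≤ 1/4`, and the supremum of `E|X - Y|²` over all
coherent pairs equals `1/4`. -/
theorem sup_coherent_sq_eq_quarter :
    (∀ (Ω : Type) (m0 : MeasurableSpace Ω) (μ : Measure Ω), IsProbabilityMeasure μ →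
        ∀ X Y : Ω → ℝ, IsCoherentPair μ X Y → ∫ ω, |X ω - Y ω| ^ 2 ∂μ ≤ 1 / 4) ∧
    IsLUB coherentSqVals (1 / 4) := by
  refine ⟨fun _ _ _ _ _ _ h => h.integral_sq_abs_sub_le_quarter,
    IsGreatest.isLUB ⟨quarter_mem_coherentSqVals, ?_⟩⟩
  rintro r ⟨Ω, _, μ, _, X, Y, hXY, rfl⟩
  exact hXY.integral_sq_abs_sub_le_quarter
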